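/- Let X ⊆ 𝔽_p^n with |X| = α·p^n for α ∈ (0,1], and let R satisfy Spec_X(α^{3/2}) ⊆ R ⊆ Spec_X(α^{3/2}/2). Define V = {v ∈ 𝔽_p^n : ⟨v,r⟩ = 0 for all r ∈ R}. Then dim(V) ≥ n − 4/α². -/

import Mathlib

/-! By Parseval, `∑ y, ‖fhat X y‖ ^ 2 = #X / p ^ n = α`, while every `r ∈ R` has
`‖fhat X r‖ ^ 2 ≥ α ^ 3 / 4`; hence `#R ≤ 4 / α ^ 2`. The space `V` is the common kernel of the
`#R` linear forms `⟨r, ·⟩`, so its codimension is at most `#R`. -/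

open Finset
open scoped Classical

noncomputable def qomega (p : ℕ) : ℂ := Complex.exp (2 * Real.pi * Complex.I / p)

noncomputable def fhat {p n : ℕ} (X : Finset (Fin n → ZMod p)) (y : Fin n → ZMod p) : ℂ :=
  ((p : ℂ) ^ n)⁻¹ * ∑ x ∈ X, qomega p ^ ((∑ i, x i * y i : ZMod p)).val

noncomputable def Spec {p n : ℕ} (X : Finset (Fin n → ZMod p)) (γ : ℝ) : Set (Fin n → ZMod p) :=
  {r | r ≠ 0 ∧ γ ≤ ‖fhat X r‖}

noncomputable def dotL (p n : ℕ) (r : Fin n → ZMod p) : (Fin n → ZMod p) →ₗ[ZMod p] ZMod p :=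
  ∑ i, r i • LinearMap.proj i

lemma AddChar.map_sum_eq_prod {A M ι : Type*} [AddCommMonoid A] [CommMonoid M]
    (ψ : AddChar A M) (s : Finset ι) (f : ι → A) : ψ (∑ i ∈ s, f i) = ∏ i ∈ s, ψ (f i) :=
  map_prod ψ.toMonoidHom (fun i => Multiplicative.ofAdd (f i)) s

section Fourier

variable {N : ℕ} [NeZero N] {n : ℕ}

lemma qomega_pow_val (a : ZMod N) : qomega N ^ a.val = ZMod.stdAddChar a := by
  rw [ZMod.stdAddChar_apply, ZMod.toCircle_apply, qomega, ← Complex.exp_nat_mul]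
  ring_nf

lemma fhat_eq_sum_stdAddChar (X : Finset (Fin n → ZMod N)) (y : Fin n → ZMod N) :
    fhat X y = ((N : ℂ) ^ n)⁻¹ * ∑ x ∈ X, ZMod.stdAddChar (x ⬝ᵥ y) := by
  simp only [fhat, qomega_pow_val]
  rfl

lemma sum_stdAddChar_dotProduct (z : Fin n → ZMod N) :
    ∑ y, ZMod.stdAddChar (z ⬝ᵥ y) = if z = 0 then (N : ℂ) ^ n else 0 := by
  simp only [dotProduct, AddChar.map_sum_eq_prod]
  rw [← Fintype.prod_sum (fun i c => ZMod.stdAddChar (z i * c))]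
  simp only [mul_comm (z _), AddChar.sum_mulShift _ (ZMod.isPrimitive_stdAddChar N), ZMod.card,
    Nat.cast_ite, Nat.cast_zero, Fintype.prod_ite_zero, prod_const, card_univ, Fintype.card_fin,
    funext_iff, Pi.zero_apply]

lemma sum_sq_norm_sum_stdAddChar (X : Finset (Fin n → ZMod N)) :
    ∑ y, ‖∑ x ∈ X, ZMod.stdAddChar (x ⬝ᵥ y)‖ ^ 2 = (N : ℝ) ^ n * #X := by
  apply Complex.ofReal_injective
  push_cast
  simp_rw [← Complex.mul_conj', map_sum, ← AddChar.map_neg_eq_conj, sum_mul_sum,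
    ← AddChar.map_add_eq_mul, ← neg_dotProduct, ← add_dotProduct]
  rw [sum_comm]
  simp_rw [sum_comm (s := univ), sum_stdAddChar_dotProduct, add_neg_eq_zero, sum_ite_eq,
    sum_ite_mem, inter_self, sum_const, nsmul_eq_mul, mul_comm]

theorem sum_sq_norm_fhat (X : Finset (Fin n → ZMod N)) :
    ∑ y, ‖fhat X y‖ ^ 2 = #X / (N : ℝ) ^ n := by
  have hN : (N : ℝ) ^ n ≠ 0 := pow_ne_zero _ (Nat.cast_ne_zero.2 (NeZero.ne N))
  simp_rw [fhat_eq_sum_stdAddChar, norm_mul, norm_inv, norm_pow, Complex.norm_natCast, mul_pow,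
    ← mul_sum, sum_sq_norm_sum_stdAddChar]
  field_simp

theorem card_mul_sq_le_of_subset_spec (X : Finset (Fin n → ZMod N)) {γ : ℝ} (hγ : 0 ≤ γ)
    {R : Finset (Fin n → ZMod N)} (hR : ↑R ⊆ Spec X γ) : #R * γ ^ 2 ≤ #X / (N : ℝ) ^ n :=
  calc #R * γ ^ 2 = ∑ _r ∈ R, γ ^ 2 := by rw [sum_const, nsmul_eq_mul]
    _ ≤ ∑ r ∈ R, ‖fhat X r‖ ^ 2 := sum_le_sum fun r hr => by gcongr; exact (hR hr).2
    _ ≤ ∑ y, ‖fhat X y‖ ^ 2 := sum_le_univ_sum_of_nonneg fun y => by positivity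
    _ = #X / (N : ℝ) ^ n := sum_sq_norm_fhat X

end Fourier

theorem finrank_le_finrank_iInf_ker_add_card {K V ι : Type*} [Field K] [AddCommGroup V]
    [Module K V] [FiniteDimensional K V] (s : Finset ι) (f : ι → Module.Dual K V) :
    Module.finrank K V ≤ Module.finrank K ↥(⨅ i ∈ s, LinearMap.ker (f i)) + #s := by
  have hker : ⨅ i ∈ s, LinearMap.ker (f i) =
      (Submodule.span K (s.image f : Set (Module.Dual K V))).dualCoannihilator := by
    apply SetLike.coe_injective
    ext v
    simp
  rw [hker, ← Subspace.finrank_add_finrank_dualCoannihilator_eq, add_comm]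
  gcongr
  exact (finrank_span_finset_le_card _).trans card_image_le

theorem stmt1_general {p n : ℕ} [Fact p.Prime] (α : ℝ) (hα : α ∈ Set.Ioc (0:ℝ) 1)
    (X : Finset (Fin n → ZMod p)) (hX : (X.card : ℝ) = α * (p:ℝ) ^ n)
    (R : Finset (Fin n → ZMod p))
    (hR2 : (R : Set (Fin n → ZMod p)) ⊆ Spec X (α ^ ((3:ℝ)/2) / 2)) :
    (n : ℝ) - 4 / α ^ 2 ≤
      (Module.finrank (ZMod p) ↥(⨅ r ∈ R, LinearMap.ker (dotL p n r)) : ℝ) := by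
  have hα0 : 0 < α := hα.1
  have hγ : (α ^ ((3:ℝ)/2) / 2) ^ 2 = α ^ 3 / 4 := by
    rw [div_pow, ← Real.rpow_natCast, ← Real.rpow_mul hα0.le]
    norm_num
  have hcard : #R * (α ^ 3 / 4) ≤ α := by
    have hpn : (p : ℝ) ^ n ≠ 0 := pow_ne_zero _ (Nat.cast_ne_zero.2 (NeZero.ne p))
    simpa [hγ, hX, hpn] using card_mul_sq_le_of_subset_spec X (by positivity) hR2
  have hR : (#R : ℝ) ≤ 4 / α ^ 2 := by
    rw [le_div_iff₀ (by positivity)]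
    nlinarith
  have hdim := finrank_le_finrank_iInf_ker_add_card R (dotL p n)
  rw [Module.finrank_fin_fun] at hdim
  have hdim' : (n : ℝ) ≤ Module.finrank (ZMod p) ↥(⨅ r ∈ R, LinearMap.ker (dotL p n r)) + #R := by
    exact_mod_cast hdim
  linarith

theorem stmt1 {p n : ℕ} [Fact p.Prime] (α : ℝ) (hα : α ∈ Set.Ioc (0:ℝ) 1)
    (X : Finset (Fin n → ZMod p)) (hX : (X.card : ℝ) = α * (p:ℝ) ^ n)
    (R : Finset (Fin n → ZMod p))
    (hR1 : Spec X (α ^ ((3:ℝ)/2)) ⊆ (R : Set (Fin n → ZMod p)))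
    (hR2 : (R : Set (Fin n → ZMod p)) ⊆ Spec X (α ^ ((3:ℝ)/2) / 2)) :
    (n : ℝ) - 4 / α ^ 2 ≤
      (Module.finrank (ZMod p) ↥(⨅ r ∈ R, LinearMap.ker (dotL p n r)) : ℝ) :=
  stmt1_general α hα X hX R hR2
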